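/- arXiv:2103.00551 — 2 statements merged into one kernel-verified Lean document; each statement's English description precedes it below -/
import Mathlib

section
/- Let u, b : ℝ² → ℝ² be smooth with div u = 0 and -Δb + (u·∇)b - (b·∇)u = 0 pointwise on ℝ², and let ψ : ℝ² → ℝ be a smooth function with b = ∇⊥ψ. Then there exists a constant c₀ ∈ ℝ such that -Δψ + u·∇ψ = c₀ everywhere on ℝ²; equivalently, ∇⊥(-Δψ + u·∇ψ) = 0 on ℝ². -/
open MeasureTheory Metric

noncomputable section

abbrev E2 : Type := EuclideanSpace ℝ (Fin 2)

/-- Partial derivative `∂ᵢ f` of a scalar function on `ℝ²`. -/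
def pd (f : E2 → ℝ) (i : Fin 2) (x : E2) : ℝ :=
  fderiv ℝ f x (EuclideanSpace.single i 1)

/-- Partial derivative `∂ᵢ uⱼ` of a vector field on `ℝ²`. -/
def pdv (u : E2 → E2) (i j : Fin 2) (x : E2) : ℝ :=
  pd (fun y => u y j) i x

/-- Laplacian of a scalar function on `ℝ²`. -/
def lap (f : E2 → ℝ) (x : E2) : ℝ :=
  pd (pd f 0) 0 x + pd (pd f 1) 1 x

/-- `|∇f|²` for a scalar function. -/
def gradSq (f : E2 → ℝ) (x : E2) : ℝ := (pd f 0 x)^2 + (pd f 1 x)^2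

/-- `|∇u|²` for a vector field: sum of squares of all first-order partials. -/
def gradSqV (u : E2 → E2) (x : E2) : ℝ := ∑ i, ∑ j, (pdv u i j x)^2

/-- Drift term `u·∇f`. -/
def advect (u : E2 → E2) (f : E2 → ℝ) (x : E2) : ℝ :=
  u x 0 * pd f 0 x + u x 1 * pd f 1 x

end

/-
Write `F = -Δψ + u·∇ψ`. Differentiating `F` and commuting derivatives of `ψ`, the substitution
`b = ∇⊥ψ` turns the induction equation into the identity `∇F = -(R b)⊥ + (div u) ∇ψ`, where `R b`
is its left-hand side. Hence `div u = 0` and `R b = 0` force `∇F = 0`, and `F` is constant on the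
connected space `ℝ²`.
-/

section PartialDerivative

variable {f g : E2 → ℝ} {x : E2}

theorem ContDiff.pd {n m : WithTop ℕ∞} (hf : ContDiff ℝ n f) (hmn : m + 1 ≤ n) (i : Fin 2) :
    ContDiff ℝ m (pd f i) :=
  (hf.fderiv_right hmn).clm_apply contDiff_const

theorem pd_pd_comm {n : WithTop ℕ∞} (hf : ContDiffAt ℝ n f x) (hn : 2 ≤ n) (i j : Fin 2) :
    pd (pd f i) j x = pd (pd f j) i x := by
  have hf' : DifferentiableAt ℝ (fderiv ℝ f) x :=
    (hf.fderiv_right (m := 1) (by rwa [one_add_one_eq_two])).differentiableAt one_ne_zero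
  have hsecond : ∀ k l : Fin 2, pd (pd f k) l x =
      fderiv ℝ (fderiv ℝ f) x (EuclideanSpace.single l 1) (EuclideanSpace.single k 1) := by
    intro k l
    change fderiv ℝ (fun y => fderiv ℝ f y _) x _ = _
    simp [fderiv_clm_apply hf' (differentiableAt_const _)]
  rw [hsecond, hsecond, hf.isSymmSndFDerivAt (by simpa using hn)]

theorem pd_pd_comm_fun {n : WithTop ℕ∞} (hf : ContDiff ℝ n f) (hn : 2 ≤ n) (i j : Fin 2) :
    pd (pd f i) j = pd (pd f j) i :=
  funext fun _ => pd_pd_comm hf.contDiffAt hn i j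

theorem pd_add (hf : DifferentiableAt ℝ f x) (hg : DifferentiableAt ℝ g x) (i : Fin 2) :
    pd (fun y => f y + g y) i x = pd f i x + pd g i x := by
  simp [pd, fderiv_fun_add hf hg]

theorem pd_mul (hf : DifferentiableAt ℝ f x) (hg : DifferentiableAt ℝ g x) (i : Fin 2) :
    pd (fun y => f y * g y) i x = pd f i x * g x + f x * pd g i x := by
  simp [pd, fderiv_fun_mul hf hg]
  ring

theorem pd_neg (i : Fin 2) : pd (fun y => -f y) i = fun x => -pd f i x := by
  funext x
  simp [pd, fderiv_fun_neg]

theorem exists_eq_const_of_pd_eq_zero (hf : Differentiable ℝ f) (h : ∀ i x, pd f i x = 0) :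
    ∃ c, ∀ x, f x = c := by
  have hfderiv : ∀ x, fderiv ℝ f x = 0 := fun x =>
    ContinuousLinearMap.coe_injective <| (EuclideanSpace.basisFun (Fin 2) ℝ).toBasis.ext
      fun i => by simpa [pd] using h i x
  exact ⟨f 0, fun x => is_const_of_fderiv_eq_zero hf hfderiv x 0⟩

end PartialDerivative

section DriftDiffusion

noncomputable def divergence (u : E2 → E2) (x : E2) : ℝ :=
  pdv u 0 0 x + pdv u 1 1 x

noncomputable def inductionResidual (u b : E2 → E2) (j : Fin 2) (x : E2) : ℝ :=
  -(lap (fun y => b y j) x) + advect u (fun y => b y j) x - advect b (fun y => u y j) x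

noncomputable def driftDiffusion (u : E2 → E2) (ψ : E2 → ℝ) (x : E2) : ℝ :=
  -(lap ψ x) + advect u ψ x

variable {u : E2 → E2} {ψ : E2 → ℝ}

theorem pd_lap (hψ : ContDiff ℝ 3 ψ) (j : Fin 2) (x : E2) :
    pd (lap ψ) j x = lap (pd ψ j) x := by
  have hψ' (i : Fin 2) : ContDiff ℝ 2 (pd ψ i) := hψ.pd le_rfl i
  have hψ'' (i k : Fin 2) : Differentiable ℝ (pd (pd ψ i) k) :=
    ((hψ' i).pd (m := 1) (by norm_num) k).differentiable one_ne_zero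
  unfold lap
  rw [pd_add (hψ'' 0 0 x) (hψ'' 1 1 x), pd_pd_comm_fun (hψ' 0) le_rfl 0 j,
    pd_pd_comm_fun (hψ' 1) le_rfl 1 j, pd_pd_comm_fun hψ (by norm_num) 0 j,
    pd_pd_comm_fun hψ (by norm_num) 1 j]

theorem pd_advect (hu : Differentiable ℝ u) (hψ : ContDiff ℝ 2 ψ) (j : Fin 2) (x : E2) :
    pd (advect u ψ) j x =
      pdv u j 0 x * pd ψ 0 x + pdv u j 1 x * pd ψ 1 x + advect u (pd ψ j) x := by
  have hψ' (i : Fin 2) : Differentiable ℝ (pd ψ i) :=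
    (hψ.pd (m := 1) (by norm_num) i).differentiable one_ne_zero
  have hu' (i : Fin 2) : DifferentiableAt ℝ (fun y => u y i) x := differentiable_euclidean.mp hu i x
  have h0 : DifferentiableAt ℝ (fun y => u y 0 * pd ψ 0 y) x := (hu' 0).mul (hψ' 0 x)
  have h1 : DifferentiableAt ℝ (fun y => u y 1 * pd ψ 1 y) x := (hu' 1).mul (hψ' 1 x)
  unfold advect pdv
  rw [pd_add h0 h1,
    pd_mul (hu' 0) (hψ' 0 x), pd_mul (hu' 1) (hψ' 1 x),
    pd_pd_comm_fun hψ le_rfl 0 j, pd_pd_comm_fun hψ le_rfl 1 j]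
  ring

theorem differentiable_lap (hψ : ContDiff ℝ 3 ψ) : Differentiable ℝ (lap ψ) := by
  have hψ'' (i : Fin 2) : Differentiable ℝ (pd (pd ψ i) i) :=
    ((hψ.pd (m := 2) (by norm_num) i).pd (m := 1) (by norm_num) i).differentiable one_ne_zero
  exact (hψ'' 0).add (hψ'' 1)

theorem differentiable_advect (hu : Differentiable ℝ u) (hψ : ContDiff ℝ 2 ψ) :
    Differentiable ℝ (advect u ψ) := by
  have hψ' (i : Fin 2) : Differentiable ℝ (pd ψ i) :=
    (hψ.pd (m := 1) (by norm_num) i).differentiable one_ne_zero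
  have hu' := differentiable_euclidean.mp hu
  exact ((hu' 0).mul (hψ' 0)).add ((hu' 1).mul (hψ' 1))

theorem differentiable_driftDiffusion (hu : Differentiable ℝ u) (hψ : ContDiff ℝ 3 ψ) :
    Differentiable ℝ (driftDiffusion u ψ) :=
  (differentiable_lap hψ).neg.add (differentiable_advect hu (hψ.of_le (by norm_num)))

theorem pd_driftDiffusion (hu : Differentiable ℝ u) (hψ : ContDiff ℝ 3 ψ) (j : Fin 2) (x : E2) :
    pd (driftDiffusion u ψ) j x = -lap (pd ψ j) x + pdv u j 0 x * pd ψ 0 x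
      + pdv u j 1 x * pd ψ 1 x + advect u (pd ψ j) x := by
  have hlap : DifferentiableAt ℝ (fun y => -lap ψ y) x := (differentiable_lap hψ x).neg
  unfold driftDiffusion
  rw [pd_add hlap (differentiable_advect hu (hψ.of_le (by norm_num)) x)]
  simp only [pd_neg, pd_lap hψ, pd_advect hu (hψ.of_le (by norm_num))]
  ring

theorem pd_driftDiffusion_of_eq_perp_grad {b : E2 → E2} (hu : Differentiable ℝ u)
    (hψ : ContDiff ℝ 3 ψ) (hbψ : ∀ x, b x 0 = pd ψ 1 x ∧ b x 1 = -pd ψ 0 x) (x : E2) :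
    pd (driftDiffusion u ψ) 0 x = -inductionResidual u b 1 x + pd ψ 0 x * divergence u x ∧
      pd (driftDiffusion u ψ) 1 x = inductionResidual u b 0 x + pd ψ 1 x * divergence u x := by
  have hb0 : (fun y => b y 0) = pd ψ 1 := funext fun y => (hbψ y).1
  have hb1 : (fun y => b y 1) = fun y => -pd ψ 0 y := funext fun y => (hbψ y).2
  unfold inductionResidual divergence
  rw [hb0, hb1, pd_driftDiffusion hu hψ, pd_driftDiffusion hu hψ]
  simp only [lap, advect, pd_neg, (hbψ x).1, (hbψ x).2, pdv]
  constructor <;> ring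

end DriftDiffusion

theorem stream_drift_diffusion_general (u b : E2 → E2) (ψ : E2 → ℝ)
    (hu : ContDiff ℝ (⊤ : ℕ∞) u)
    (hψ : ContDiff ℝ (⊤ : ℕ∞) ψ)
    (hdiv : ∀ x : E2, pdv u 0 0 x + pdv u 1 1 x = 0)
    (hind : ∀ x : E2, ∀ j : Fin 2,
      -(lap (fun y => b y j) x) + advect u (fun y => b y j) x
        - advect b (fun y => u y j) x = 0)
    (hbψ : ∀ x : E2, b x 0 = pd ψ 1 x ∧ b x 1 = -(pd ψ 0 x)) :
    ∃ c₀ : ℝ, ∀ x : E2, -(lap ψ x) + advect u ψ x = c₀ := by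
  have hu' : Differentiable ℝ u := hu.differentiable (by simp)
  have hψ' : ContDiff ℝ 3 ψ := hψ.of_le (WithTop.coe_le_coe.mpr le_top)
  show ∃ c₀, ∀ x, driftDiffusion u ψ x = c₀
  refine exists_eq_const_of_pd_eq_zero (differentiable_driftDiffusion hu' hψ') fun i x => ?_
  obtain ⟨h0, h1⟩ := pd_driftDiffusion_of_eq_perp_grad hu' hψ' hbψ x
  have hres (j : Fin 2) : inductionResidual u b j x = 0 := hind x j
  have hdiv' : divergence u x = 0 := hdiv x
  fin_cases i
  · simpa [hres, hdiv'] using h0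
  · simpa [hres, hdiv'] using h1

/-- If `div u = 0`, `-Δb + (u·∇)b - (b·∇)u = 0` and `b = ∇⊥ψ`, then the stream
function satisfies `-Δψ + u·∇ψ = c₀` for some constant `c₀`. -/
theorem stream_drift_diffusion (u b : E2 → E2) (ψ : E2 → ℝ)
    (hu : ContDiff ℝ (⊤ : ℕ∞) u) (hb : ContDiff ℝ (⊤ : ℕ∞) b)
    (hψ : ContDiff ℝ (⊤ : ℕ∞) ψ)
    (hdiv : ∀ x : E2, pdv u 0 0 x + pdv u 1 1 x = 0)
    (hind : ∀ x : E2, ∀ j : Fin 2,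
      -(lap (fun y => b y j) x) + advect u (fun y => b y j) x
        - advect b (fun y => u y j) x = 0)
    (hbψ : ∀ x : E2, b x 0 = pd ψ 1 x ∧ b x 1 = -(pd ψ 0 x)) :
    ∃ c₀ : ℝ, ∀ x : E2, -(lap ψ x) + advect u ψ x = c₀ :=
  stream_drift_diffusion_general u b ψ hu hψ hdiv hind hbψ
end

section
/- Let v be a real-valued function continuous on the closed unit ball of ℝ² and C¹ on the open unit ball B with ∫_B |∇v|² dx < ∞, and suppose that for every r ∈ (0,1) the maximum principle holds on B(0,r): the maximum of v over the closed ball of radius r equals its maximum over the circle ∂B(0,r), and likewise for the minimum. Then there is an absolute constant c > 0 such that for every r ∈ (0,1): sup_{x ∈ B(0,r)} |v(x) - v(0)| ≤ (c / √(-log r)) · (∫_{B ∖ B(0,r)} |∇v|² dx)^{1/2}. -/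
open MeasureTheory Metric

/-! By the maximum principle, `|v x - v 0|` for `x ∈ B(0,r)` is at most the oscillation of `v`
on every circle `∂B(0,s)`, `r < s < 1`. Along such a circle, the fundamental theorem of calculus
and Cauchy–Schwarz bound the squared oscillation by `2π s² ∫_{-π}^{π} |∇v(s e^{iθ})|² dθ`.
Dividing by `2π s` and integrating over `s ∈ (r,1)` in polar coordinates gives
`|v x - v 0|² (-log r) / (2π) ≤ ∫_{B ∖ B(0,r)} |∇v|²`, hence the claim with `c = √(2π)`. -/

open Real Set
open scoped ENNReal

lemma sq_intervalIntegral_le {f : ℝ → ℝ} (hf : Continuous f) {a b : ℝ} (hab : a ≤ b) :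
    (∫ t in a..b, f t) ^ 2 ≤ (b - a) * ∫ t in a..b, f t ^ 2 := by
  rcases hab.eq_or_lt with rfl | hlt
  · simp
  set I := ∫ t in a..b, f t
  -- expand `0 ≤ ∫ (f - m)²` with `m` the mean value of `f`
  set m := I / (b - a)
  have hvar : 0 ≤ ∫ t in a..b, (f t - m) ^ 2 :=
    intervalIntegral.integral_nonneg hab fun t _ => sq_nonneg _
  have hexpand : ∫ t in a..b, (f t - m) ^ 2 =
      (∫ t in a..b, f t ^ 2) - 2 * m * I + m ^ 2 * (b - a) := by
    have hi : IntervalIntegrable (fun t => f t ^ 2 - 2 * m * f t) volume a b :=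
      ((hf.pow 2).sub (continuous_const.mul hf)).intervalIntegrable _ _
    calc _ = ∫ t in a..b, (f t ^ 2 - 2 * m * f t) + m ^ 2 := by congr 1; ext t; ring
      _ = _ := by
        rw [intervalIntegral.integral_add hi intervalIntegrable_const,
          intervalIntegral.integral_sub (f := fun t => f t ^ 2) (g := fun t => 2 * m * f t)
            ((hf.pow 2).intervalIntegrable _ _) ((continuous_const.mul hf).intervalIntegrable _ _),
          intervalIntegral.integral_const_mul, intervalIntegral.integral_const, smul_eq_mul]
        ring
  have hmI : m * (b - a) = I := div_mul_cancel₀ _ (sub_pos.2 hlt).ne'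
  have hQ : m ^ 2 * (b - a) ≤ ∫ t in a..b, f t ^ 2 := by
    rw [← hmI] at hexpand; nlinarith
  rw [← hmI]
  nlinarith [mul_le_mul_of_nonneg_left hQ (sub_pos.2 hlt).le]

lemma sq_sub_le_mul_integral_deriv_sq {φ φ' : ℝ → ℝ} {T : ℝ} (hT : 0 < T)
    (hφ : Function.Periodic φ T) (hderiv : ∀ t, HasDerivAt φ (φ' t) t) (hφ' : Continuous φ')
    (a b : ℝ) : (φ a - φ b) ^ 2 ≤ T * ∫ t in b..b + T, φ' t ^ 2 := by
  set a' := toIcoMod hT b a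
  obtain ⟨hba', ha'T⟩ := toIcoMod_mem_Ico hT b a
  have hφa : φ a' = φ a := hφ.sub_zsmul_eq _
  have hftc : ∫ t in b..a', φ' t = φ a' - φ b :=
    intervalIntegral.integral_eq_sub_of_hasDerivAt (fun t _ => hderiv t)
      (hφ'.intervalIntegrable _ _)
  calc (φ a - φ b) ^ 2 = (∫ t in b..a', φ' t) ^ 2 := by rw [hftc, hφa]
    _ ≤ (a' - b) * ∫ t in b..a', φ' t ^ 2 := sq_intervalIntegral_le hφ' hba'
    _ ≤ T * ∫ t in b..b + T, φ' t ^ 2 := by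
      gcongr ?_ * ?_
      · exact intervalIntegral.integral_nonneg (by linarith) fun t _ => sq_nonneg _
      · linarith
      · exact intervalIntegral.integral_mono_interval le_rfl hba' ha'T.le
          (Filter.Eventually.of_forall fun t => sq_nonneg _) ((hφ'.pow 2).intervalIntegrable _ _)

lemma exists_abs_sub_le_of_sSup_sInf_eq {α : Type*} [TopologicalSpace α] {v : α → ℝ}
    {K S : Set α} (hK : IsCompact K) (hS : IsCompact S) (hSne : S.Nonempty) (hSK : S ⊆ K)
    (hv : ContinuousOn v K) (hsup : sSup (v '' K) = sSup (v '' S))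
    (hinf : sInf (v '' K) = sInf (v '' S)) {x y : α} (hx : x ∈ K) (hy : y ∈ K) :
    ∃ p ∈ S, ∃ q ∈ S, |v x - v y| ≤ v p - v q := by
  have hvS : IsCompact (v '' S) := hS.image_of_continuousOn (hv.mono hSK)
  have hvK : IsCompact (v '' K) := hK.image_of_continuousOn hv
  obtain ⟨p, hp, hvp⟩ := hvS.sSup_mem (hSne.image v)
  obtain ⟨q, hq, hvq⟩ := hvS.sInf_mem (hSne.image v)
  have hle : ∀ z ∈ K, v q ≤ v z ∧ v z ≤ v p := fun z hz =>
    ⟨hvq ▸ hinf ▸ csInf_le hvK.bddBelow (mem_image_of_mem v hz),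
      hvp ▸ hsup ▸ le_csSup hvK.bddAbove (mem_image_of_mem v hz)⟩
  refine ⟨p, hp, q, hq, abs_sub_le_iff.2 ⟨?_, ?_⟩⟩ <;>
    linarith [hle x hx, hle y hy]

lemma ofReal_integral_le_lintegral_ofReal {α : Type*} [MeasurableSpace α] {μ : Measure α}
    {f : α → ℝ} (hf : 0 ≤ᵐ[μ] f) :
    ENNReal.ofReal (∫ a, f a ∂μ) ≤ ∫⁻ a, ENNReal.ofReal (f a) ∂μ := by
  calc ENNReal.ofReal (∫ a, f a ∂μ) ≤ ‖∫ a, f a ∂μ‖ₑ := by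
        rw [Real.enorm_eq_ofReal_abs]; exact ENNReal.ofReal_le_ofReal (le_abs_self _)
    _ ≤ ∫⁻ a, ‖f a‖ₑ ∂μ := enorm_integral_le_lintegral_enorm f
    _ = ∫⁻ a, ENNReal.ofReal (f a) ∂μ := lintegral_congr_ae <| hf.mono fun a ha =>
        Real.enorm_eq_ofReal ha

noncomputable def prodEquivE2 : ℝ × ℝ ≃ᵐ E2 :=
  MeasurableEquiv.finTwoArrow.symm.trans (MeasurableEquiv.toLp 2 (Fin 2 → ℝ))

lemma volume_preserving_prodEquivE2 : MeasurePreserving prodEquivE2 :=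
  (PiLp.volume_preserving_toLp (Fin 2)).comp (volume_preserving_finTwoArrow ℝ).symm

noncomputable def circlePoint (s θ : ℝ) : E2 := !₂[s * cos θ, s * sin θ]

lemma prodEquivE2_polarCoord_symm (p : ℝ × ℝ) :
    prodEquivE2 (polarCoord.symm p) = circlePoint p.1 p.2 := rfl

lemma circlePoint_eq_smul (s θ : ℝ) :
    circlePoint s θ = (s * cos θ) • EuclideanSpace.single 0 1 +
      (s * sin θ) • EuclideanSpace.single 1 1 := by
  ext i
  fin_cases i <;> simp [circlePoint]

lemma norm_circlePoint (s θ : ℝ) : ‖circlePoint s θ‖ = |s| := by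
  have h : (s * cos θ) ^ 2 + (s * sin θ) ^ 2 = s ^ 2 := by
    linear_combination s ^ 2 * cos_sq_add_sin_sq θ
  simp [circlePoint, EuclideanSpace.norm_eq, h, sqrt_sq_eq_abs]

lemma circlePoint_add_two_pi (s θ : ℝ) : circlePoint s (θ + 2 * π) = circlePoint s θ := by
  simp [circlePoint]

lemma hasDerivAt_circlePoint (s θ : ℝ) :
    HasDerivAt (circlePoint s) ((-(s * sin θ)) • EuclideanSpace.single 0 1 +
      (s * cos θ) • EuclideanSpace.single 1 1) θ := by
  rw [show circlePoint s = _ from funext (circlePoint_eq_smul s)]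
  refine (HasDerivAt.smul_const ?_ _).add (HasDerivAt.smul_const ?_ _)
  · simpa using (hasDerivAt_cos θ).const_mul s
  · simpa using (hasDerivAt_sin θ).const_mul s

lemma exists_circlePoint_eq {s : ℝ} {p : E2} (hp : p ∈ sphere (0 : E2) s) :
    ∃ θ, circlePoint s θ = p := by
  set z := Complex.orthonormalBasisOneI.repr.symm p
  have hz : ‖z‖ = s := by
    rw [LinearIsometryEquiv.norm_map]; simpa using hp
  refine ⟨z.arg, ?_⟩
  ext i
  fin_cases i <;> simp [circlePoint, z, ← hz]

lemma lintegral_polar_le_lintegral_annulus {f : E2 → ℝ≥0∞} (hf : Measurable f) {r R : ℝ}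
    (hr : 0 ≤ r) :
    ∫⁻ s in Ioo r R, ∫⁻ θ in Ioo (-π) π, ENNReal.ofReal s * f (circlePoint s θ) ≤
      ∫⁻ y in ball (0 : E2) R \ ball (0 : E2) r, f y := by
  set A := ball (0 : E2) R \ ball (0 : E2) r
  have hA : MeasurableSet A := measurableSet_ball.diff measurableSet_ball
  have hsub : Ioo r R ×ˢ Ioo (-π) π ⊆ polarCoord.target := fun p hp =>
    ⟨hr.trans_lt hp.1.1, hp.2⟩
  calc ∫⁻ s in Ioo r R, ∫⁻ θ in Ioo (-π) π, ENNReal.ofReal s * f (circlePoint s θ)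
      = ∫⁻ p in Ioo r R ×ˢ Ioo (-π) π,
          ENNReal.ofReal p.1 • (A.indicator f ∘ prodEquivE2) (polarCoord.symm p) := by
        rw [Measure.volume_eq_prod, ← Measure.prod_restrict, lintegral_prod]
        · refine setLIntegral_congr_fun measurableSet_Ioo fun s hs =>
            setLIntegral_congr_fun measurableSet_Ioo fun θ _ => ?_
          have hmem : circlePoint s θ ∈ A := by
            simp [A, norm_circlePoint, abs_of_pos (hr.trans_lt hs.1), hs.1.le, hs.2]
          simp only [Function.comp_apply, prodEquivE2_polarCoord_symm, indicator_of_mem hmem,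
            smul_eq_mul]
        · exact (measurable_fst.ennreal_ofReal.smul (((hf.indicator hA).comp
            prodEquivE2.measurable).comp continuous_polarCoord_symm.measurable)).aemeasurable
    _ ≤ ∫⁻ p in polarCoord.target,
          ENNReal.ofReal p.1 • (A.indicator f ∘ prodEquivE2) (polarCoord.symm p) :=
        lintegral_mono_set hsub
    _ = ∫⁻ y, A.indicator f y := by
        rw [lintegral_comp_polarCoord_symm]
        exact volume_preserving_prodEquivE2.lintegral_comp_emb prodEquivE2.measurableEmbedding _
    _ = ∫⁻ y in A, f y := lintegral_indicator hA f

lemma ofReal_mul_log_le_lintegral_annulus {g : E2 → ℝ} (hg : Measurable g) (hg0 : ∀ y, 0 ≤ g y)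
    {r R a : ℝ} (hr : 0 < r) (hrR : r ≤ R) (ha : 0 ≤ a)
    (h : ∀ s ∈ Ioo r R, a ≤ s ^ 2 * ∫ θ in (-π)..π, g (circlePoint s θ)) :
    ENNReal.ofReal (a * log (R / r)) ≤
      ∫⁻ y in ball (0 : E2) R \ ball (0 : E2) r, ENNReal.ofReal (g y) := by
  have hslice : ∀ s ∈ Ioo r R, ENNReal.ofReal (a * s⁻¹) ≤
      ∫⁻ θ in Ioo (-π) π, ENNReal.ofReal s * ENNReal.ofReal (g (circlePoint s θ)) := by
    intro s hs
    have hs0 : 0 < s := hr.trans hs.1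
    calc ENNReal.ofReal (a * s⁻¹)
        ≤ ENNReal.ofReal (s * ∫ θ in (-π)..π, g (circlePoint s θ)) := by
          refine ENNReal.ofReal_le_ofReal ?_
          have := mul_le_mul_of_nonneg_right (h s hs) (inv_nonneg.2 hs0.le)
          rwa [show s ^ 2 * (∫ θ in (-π)..π, g (circlePoint s θ)) * s⁻¹ =
            s * ∫ θ in (-π)..π, g (circlePoint s θ) by field_simp] at this
      _ = ENNReal.ofReal (∫ θ in Ioo (-π) π, s * g (circlePoint s θ)) := by
          rw [intervalIntegral.integral_of_le (by linarith [pi_pos]),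
            integral_Ioc_eq_integral_Ioo, integral_const_mul]
      _ ≤ ∫⁻ θ in Ioo (-π) π, ENNReal.ofReal (s * g (circlePoint s θ)) :=
          ofReal_integral_le_lintegral_ofReal
            (Filter.Eventually.of_forall fun θ => mul_nonneg hs0.le (hg0 _))
      _ = _ := by simp_rw [ENNReal.ofReal_mul hs0.le]
  calc ENNReal.ofReal (a * log (R / r)) = ENNReal.ofReal (∫ s in Ioo r R, a * s⁻¹) := by
        rw [← integral_Ioc_eq_integral_Ioo, ← intervalIntegral.integral_of_le hrR,
          intervalIntegral.integral_const_mul, integral_inv_of_pos hr (hr.trans_le hrR)]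
    _ ≤ ∫⁻ s in Ioo r R, ENNReal.ofReal (a * s⁻¹) := by
        refine ofReal_integral_le_lintegral_ofReal ?_
        filter_upwards [ae_restrict_mem measurableSet_Ioo] with s hs
        have := hr.trans hs.1
        positivity
    _ ≤ ∫⁻ s in Ioo r R, ∫⁻ θ in Ioo (-π) π,
          ENNReal.ofReal s * ENNReal.ofReal (g (circlePoint s θ)) :=
        setLIntegral_mono' measurableSet_Ioo hslice
    _ ≤ _ := lintegral_polar_le_lintegral_annulus hg.ennreal_ofReal hr.le

lemma gradSq_nonneg (f : E2 → ℝ) (x : E2) : 0 ≤ gradSq f x := by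
  unfold gradSq; positivity

lemma measurable_gradSq (f : E2 → ℝ) : Measurable (gradSq f) :=
  ((measurable_fderiv_apply_const ℝ f _).pow_const 2).add
    ((measurable_fderiv_apply_const ℝ f _).pow_const 2)

lemma sq_fderiv_apply_le_gradSq (f : E2 → ℝ) (x : E2) (a b : ℝ) :
    (fderiv ℝ f x (a • EuclideanSpace.single 0 1 + b • EuclideanSpace.single 1 1)) ^ 2 ≤
      (a ^ 2 + b ^ 2) * gradSq f x := by
  simp only [map_add, map_smul, smul_eq_mul, gradSq, pd]
  nlinarith [sq_nonneg (a * fderiv ℝ f x (EuclideanSpace.single 1 1) -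
    b * fderiv ℝ f x (EuclideanSpace.single 0 1))]

lemma sq_sub_le_circle_integral_gradSq {v : E2 → ℝ} {U : Set E2} (hU : IsOpen U)
    (hv : ContDiffOn ℝ 1 v U) {s : ℝ} (hsU : sphere (0 : E2) s ⊆ U) {p q : E2}
    (hp : p ∈ sphere (0 : E2) s) (hq : q ∈ sphere (0 : E2) s) :
    (v p - v q) ^ 2 ≤ 2 * π * s ^ 2 * ∫ θ in (-π)..π, gradSq v (circlePoint s θ) := by
  have hs : 0 ≤ s := (norm_nonneg p).trans_eq (mem_sphere_zero_iff_norm.1 hp)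
  set c := circlePoint s
  set c' : ℝ → E2 := fun θ =>
    (-(s * sin θ)) • EuclideanSpace.single 0 1 + (s * cos θ) • EuclideanSpace.single 1 1
  have hmem : ∀ θ, c θ ∈ U := fun θ => hsU (by simp [c, norm_circlePoint, abs_of_nonneg hs])
  have hc : Continuous c :=
    continuous_iff_continuousAt.2 fun θ => (hasDerivAt_circlePoint s θ).continuousAt
  have hfd : Continuous fun θ => fderiv ℝ v (c θ) :=
    (hv.continuousOn_fderiv_of_isOpen hU le_rfl).comp_continuous hc hmem
  have hderiv : ∀ θ, HasDerivAt (v ∘ c) (fderiv ℝ v (c θ) (c' θ)) θ := fun θ =>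
    ((hv.differentiableOn one_ne_zero).differentiableAt
      (hU.mem_nhds (hmem θ))).hasFDerivAt.comp_hasDerivAt θ (hasDerivAt_circlePoint s θ)
  have hφ' : Continuous fun θ => fderiv ℝ v (c θ) (c' θ) := hfd.clm_apply (by fun_prop)
  have hper : Function.Periodic (v ∘ c) (2 * π) := fun θ => by
    simp only [Function.comp_apply, c, circlePoint_add_two_pi]
  have hG : Continuous fun θ => gradSq v (c θ) := by
    simp only [gradSq, pd]
    have h0 := hfd.clm_apply (continuous_const (y := EuclideanSpace.single (0 : Fin 2) (1 : ℝ)))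
    have h1 := hfd.clm_apply (continuous_const (y := EuclideanSpace.single (1 : Fin 2) (1 : ℝ)))
    fun_prop
  have hGper : Function.Periodic (fun θ => gradSq v (c θ)) (2 * π) := fun θ => by
    simp only [c, circlePoint_add_two_pi]
  obtain ⟨α, rfl⟩ := exists_circlePoint_eq hp
  obtain ⟨β, rfl⟩ := exists_circlePoint_eq hq
  calc (v (c α) - v (c β)) ^ 2
      ≤ 2 * π * ∫ θ in β..β + 2 * π, fderiv ℝ v (c θ) (c' θ) ^ 2 :=
        sq_sub_le_mul_integral_deriv_sq two_pi_pos hper hderiv hφ' α β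
    _ ≤ 2 * π * ∫ θ in β..β + 2 * π, s ^ 2 * gradSq v (c θ) := by
        gcongr
        refine intervalIntegral.integral_mono_on (by linarith [pi_pos])
          ((hφ'.pow 2).intervalIntegrable _ _)
          ((continuous_const.mul hG).intervalIntegrable _ _) fun θ _ => ?_
        convert sq_fderiv_apply_le_gradSq v (c θ) (-(s * sin θ)) (s * cos θ) using 2
        linear_combination (-s ^ 2) * sin_sq_add_cos_sq θ
    _ = 2 * π * s ^ 2 * ∫ θ in (-π)..π, gradSq v (c θ) := by
        rw [intervalIntegral.integral_const_mul, hGper.intervalIntegral_add_eq β (-π)]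
        ring_nf

lemma sq_abs_sub_le_circle_integral_gradSq {v : E2 → ℝ} {U : Set E2} (hU : IsOpen U)
    (hv : ContDiffOn ℝ 1 v U) {s : ℝ} (hs : 0 ≤ s) (hsU : closedBall (0 : E2) s ⊆ U)
    (hmp : sSup (v '' closedBall (0 : E2) s) = sSup (v '' sphere (0 : E2) s) ∧
      sInf (v '' closedBall (0 : E2) s) = sInf (v '' sphere (0 : E2) s))
    {x y : E2} (hx : x ∈ closedBall (0 : E2) s) (hy : y ∈ closedBall (0 : E2) s) :
    |v x - v y| ^ 2 ≤ 2 * π * s ^ 2 * ∫ θ in (-π)..π, gradSq v (circlePoint s θ) := by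
  obtain ⟨p, hp, q, hq, hpq⟩ := exists_abs_sub_le_of_sSup_sInf_eq (isCompact_closedBall _ _)
    (isCompact_sphere _ _) (NormedSpace.sphere_nonempty.2 hs) sphere_subset_closedBall
    (hv.continuousOn.mono hsU) hmp.1 hmp.2 hx hy
  calc |v x - v y| ^ 2 ≤ (v p - v q) ^ 2 := pow_le_pow_left₀ (abs_nonneg _) hpq 2
    _ ≤ _ := sq_sub_le_circle_integral_gradSq hU hv (sphere_subset_closedBall.trans hsU) hp hq

lemma le_sqrt_div_sqrt_mul_sqrt {D c L E : ℝ} (hD : 0 ≤ D) (hc : 0 ≤ c) (hL : 0 < L)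
    (h : D ^ 2 * L ≤ c * E) : D ≤ √c / √L * √E := by
  rw [div_mul_eq_mul_div, ← sqrt_mul hc, le_div_iff₀ (sqrt_pos.2 hL), ← sqrt_sq hD,
    ← sqrt_mul (sq_nonneg _)]
  exact sqrt_le_sqrt h

/-- Oscillation lemma: there is an absolute constant `c > 0` such that for any
`v` continuous on the closed unit ball, `C¹` on the open unit ball with
square-integrable gradient there, and satisfying the maximum principle on every
ball `B(0,r)`, one has
`sup_{B(0,r)} |v - v(0)| ≤ c (−log r)^{-1/2} ‖∇v‖_{L²(B \ B(0,r))}`. -/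
theorem oscillation_lemma :
    ∃ c : ℝ, 0 < c ∧ ∀ v : E2 → ℝ,
      ContinuousOn v (closedBall (0 : E2) 1) →
      ContDiffOn ℝ 1 v (ball (0 : E2) 1) →
      (∫⁻ x in ball (0 : E2) 1, ENNReal.ofReal (gradSq v x)) < ⊤ →
      (∀ r : ℝ, 0 < r → r < 1 →
        sSup (v '' closedBall (0 : E2) r) = sSup (v '' sphere (0 : E2) r) ∧
        sInf (v '' closedBall (0 : E2) r) = sInf (v '' sphere (0 : E2) r)) →
      ∀ r : ℝ, 0 < r → r < 1 → ∀ x ∈ ball (0 : E2) r,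
        |v x - v 0| ≤ c / Real.sqrt (-Real.log r) *
          Real.sqrt ((∫⁻ y in ball (0 : E2) 1 \ ball (0 : E2) r,
            ENNReal.ofReal (gradSq v y)).toReal) := by
  refine ⟨√(2 * π), by positivity, fun v _ hv hfin hmp r hr0 hr1 x hx => ?_⟩
  set E := ∫⁻ y in ball (0 : E2) 1 \ ball (0 : E2) r, ENNReal.ofReal (gradSq v y)
  have hslice : ∀ s ∈ Ioo r 1, |v x - v 0| ^ 2 / (2 * π) ≤
      s ^ 2 * ∫ θ in (-π)..π, gradSq v (circlePoint s θ) := fun s hs => by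
    rw [div_le_iff₀' two_pi_pos, ← mul_assoc]
    exact sq_abs_sub_le_circle_integral_gradSq isOpen_ball hv (hr0.trans hs.1).le
      (closedBall_subset_ball hs.2) (hmp s (hr0.trans hs.1) hs.2)
      (closedBall_subset_closedBall hs.1.le (ball_subset_closedBall hx))
      (mem_closedBall_self (hr0.trans hs.1).le)
  have hlower : ENNReal.ofReal (|v x - v 0| ^ 2 / (2 * π) * -log r) ≤ E := by
    simpa [one_div, log_inv] using ofReal_mul_log_le_lintegral_annulus (measurable_gradSq v)
      (gradSq_nonneg v) hr0 hr1.le (by positivity) hslice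
  have hE : E ≠ ⊤ := ((lintegral_mono_set sdiff_subset).trans_lt hfin).ne
  refine le_sqrt_div_sqrt_mul_sqrt (abs_nonneg _) two_pi_pos.le (neg_pos.2 (log_neg hr0 hr1)) ?_
  have := (ENNReal.ofReal_le_iff_le_toReal hE).1 hlower
  rwa [div_mul_eq_mul_div, div_le_iff₀' two_pi_pos] at this
end
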